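/- Let α and β be measurable spaces, let μ be a probability measure on α × β, and let ρ₁, ρ₂ be probability measures on α and β respectively. Then KL(μ‖ρ₁ ⊗ ρ₂) ≥ KL(μ.fst‖ρ₁) + KL(μ.snd‖ρ₂) (as an inequality in [0,∞]). -/

import Mathlib

open MeasureTheory
open scoped ENNReal NNReal

open Classical in
/-- The Kullback–Leibler divergence `KL(μ‖ν) ∈ [0,∞]`: it is `∫ log(dμ/dν) dμ` if `μ ≪ ν`
and the log-likelihood ratio is `μ`-integrable, and `+∞` otherwise. -/
noncomputable def klDiv {X : Type*} [MeasurableSpace X] (μ ν : Measure X) : ℝ≥0∞ :=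
  if μ ≪ ν ∧ Integrable (fun x => Real.log ((μ.rnDeriv ν x).toReal)) μ
  then ENNReal.ofReal (∫ x, Real.log ((μ.rnDeriv ν x).toReal) ∂μ)
  else ⊤

/-!
If `μ ≪ ρ₁ ⊗ ρ₂`, the marginal densities `g₁ = dμ.fst/dρ₁` and `g₂ = dμ.snd/dρ₂` are positive
`μ`-a.e., so `μ ≪ μ.fst ⊗ μ.snd = (g₁ ⊗ g₂) • (ρ₁ ⊗ ρ₂)` and, `μ`-a.e.,
`log dμ/d(ρ₁ ⊗ ρ₂) = log dμ/d(μ.fst ⊗ μ.snd) + log g₁(x) + log g₂(y)`.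
Integrating against `μ`, the last two terms give `KL(μ.fst‖ρ₁) + KL(μ.snd‖ρ₂)` (they are
integrable by the data processing inequality), and the first is `KL(μ‖μ.fst ⊗ μ.snd) ≥ 0`.
-/

namespace MeasureTheory

section Llr

variable {α : Type*} [MeasurableSpace α] {μ ν κ : Measure α}

lemma Measure.AbsolutelyContinuous.withDensity_of_ae_ne_zero {f : α → ℝ≥0∞} (hμν : μ ≪ ν)
    (hf : AEMeasurable f ν) (hf_ne_zero : ∀ᵐ x ∂μ, f x ≠ 0) : μ ≪ ν.withDensity f := by
  refine Measure.ae_le_iff_absolutelyContinuous.1 fun s hs => ?_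
  filter_upwards [hμν.ae_le ((ae_withDensity_iff' hf).1 hs), hf_ne_zero] with x hx hx0
  exact hx hx0

lemma llr_ae_eq_llr_add_llr [SigmaFinite μ] [SigmaFinite ν] [SigmaFinite κ]
    (hμν : μ ≪ ν) (hνκ : ν ≪ κ) : llr μ κ =ᵐ[μ] llr μ ν + llr ν κ := by
  filter_upwards [hμν.ae_le (hνκ.ae_le (Measure.rnDeriv_mul_rnDeriv hμν)),
    Measure.rnDeriv_pos hμν, hμν.ae_le (Measure.rnDeriv_ne_top μ ν),
    hμν.ae_le (Measure.rnDeriv_pos hνκ), (hμν.trans hνκ).ae_le (Measure.rnDeriv_ne_top ν κ)]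
    with x hchain hμν_pos hμν_top hνκ_pos hνκ_top
  simp only [llr_def, Pi.add_apply, ← hchain, Pi.mul_apply, ENNReal.toReal_mul]
  exact Real.log_mul (ENNReal.toReal_pos hμν_pos.ne' hμν_top).ne'
    (ENNReal.toReal_pos hνκ_pos.ne' hνκ_top).ne'

lemma integral_llr_nonneg [IsFiniteMeasure μ] [IsFiniteMeasure ν] (h : μ ≪ ν)
    (h_eq : μ Set.univ = ν Set.univ) : 0 ≤ ∫ x, llr μ ν x ∂μ :=
  InformationTheory.toReal_klDiv_of_measure_eq h h_eq ▸ ENNReal.toReal_nonneg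

end Llr

section Prod

variable {α β : Type*} [MeasurableSpace α] [MeasurableSpace β]
  {μ₁ ρ₁ : Measure α} {μ₂ ρ₂ : Measure β} [SigmaFinite μ₁] [SigmaFinite μ₂]
  [SigmaFinite ρ₁] [SigmaFinite ρ₂]

lemma Measure.prod_eq_withDensity_rnDeriv (h₁ : μ₁ ≪ ρ₁) (h₂ : μ₂ ≪ ρ₂) :
    μ₁.prod μ₂ = (ρ₁.prod ρ₂).withDensity fun p => μ₁.rnDeriv ρ₁ p.1 * μ₂.rnDeriv ρ₂ p.2 := by
  conv_lhs =>
    rw [← Measure.withDensity_rnDeriv_eq μ₁ ρ₁ h₁, ← Measure.withDensity_rnDeriv_eq μ₂ ρ₂ h₂]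
  exact prod_withDensity (Measure.measurable_rnDeriv _ _) (Measure.measurable_rnDeriv _ _)

lemma Measure.rnDeriv_prod (h₁ : μ₁ ≪ ρ₁) (h₂ : μ₂ ≪ ρ₂) :
    (μ₁.prod μ₂).rnDeriv (ρ₁.prod ρ₂) =ᵐ[ρ₁.prod ρ₂]
      fun p => μ₁.rnDeriv ρ₁ p.1 * μ₂.rnDeriv ρ₂ p.2 := by
  rw [Measure.prod_eq_withDensity_rnDeriv h₁ h₂]
  exact Measure.rnDeriv_withDensity _ (by fun_prop)

lemma llr_prod_ae_eq (h₁ : μ₁ ≪ ρ₁) (h₂ : μ₂ ≪ ρ₂) :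
    llr (μ₁.prod μ₂) (ρ₁.prod ρ₂) =ᵐ[μ₁.prod μ₂] fun p => llr μ₁ ρ₁ p.1 + llr μ₂ ρ₂ p.2 := by
  have hfst := Measure.quasiMeasurePreserving_fst (μ := μ₁) (ν := μ₂)
  have hsnd := Measure.quasiMeasurePreserving_snd (μ := μ₁) (ν := μ₂)
  filter_upwards [(h₁.prod h₂).ae_le (Measure.rnDeriv_prod h₁ h₂),
    hfst.ae (Measure.rnDeriv_pos h₁), hfst.ae (h₁.ae_le (Measure.rnDeriv_ne_top μ₁ ρ₁)),
    hsnd.ae (Measure.rnDeriv_pos h₂), hsnd.ae (h₂.ae_le (Measure.rnDeriv_ne_top μ₂ ρ₂))]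
    with p hp hpos₁ htop₁ hpos₂ htop₂
  simp only [llr_def, hp, ENNReal.toReal_mul]
  exact Real.log_mul (ENNReal.toReal_pos hpos₁.ne' htop₁).ne'
    (ENNReal.toReal_pos hpos₂.ne' htop₂).ne'

end Prod

section Marginals

variable {α β : Type*} [MeasurableSpace α] [MeasurableSpace β]
  {μ : Measure (α × β)} {ρ₁ : Measure α} {ρ₂ : Measure β}

lemma Measure.AbsolutelyContinuous.fst_of_prod (h : μ ≪ ρ₁.prod ρ₂) : μ.fst ≪ ρ₁ :=
  (h.map measurable_fst).trans Measure.quasiMeasurePreserving_fst.absolutelyContinuous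

lemma Measure.AbsolutelyContinuous.snd_of_prod (h : μ ≪ ρ₁.prod ρ₂) : μ.snd ≪ ρ₂ :=
  (h.map measurable_snd).trans Measure.quasiMeasurePreserving_snd.absolutelyContinuous

lemma Measure.absolutelyContinuous_fst_prod_snd [IsFiniteMeasure μ] [SigmaFinite ρ₁]
    [SigmaFinite ρ₂] (h : μ ≪ ρ₁.prod ρ₂) : μ ≪ μ.fst.prod μ.snd := by
  have h₁ := h.fst_of_prod
  have h₂ := h.snd_of_prod
  rw [Measure.prod_eq_withDensity_rnDeriv h₁ h₂]
  refine h.withDensity_of_ae_ne_zero (by fun_prop) ?_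
  filter_upwards [ae_of_ae_map measurable_fst.aemeasurable (Measure.rnDeriv_pos h₁),
    ae_of_ae_map measurable_snd.aemeasurable (Measure.rnDeriv_pos h₂)] with p hp₁ hp₂
  exact mul_ne_zero hp₁.ne' hp₂.ne'

variable [IsProbabilityMeasure ρ₁] [IsProbabilityMeasure ρ₂]

lemma integrable_llr_fst [IsFiniteMeasure μ] (h : μ ≪ ρ₁.prod ρ₂)
    (hint : Integrable (llr μ (ρ₁.prod ρ₂)) μ) : Integrable (llr μ.fst ρ₁) μ.fst :=
  Measure.fst_prod (μ := ρ₁) (ν := ρ₂) ▸ InformationTheory.integrable_llr_map h measurable_fst hint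

lemma integrable_llr_snd [IsFiniteMeasure μ] (h : μ ≪ ρ₁.prod ρ₂)
    (hint : Integrable (llr μ (ρ₁.prod ρ₂)) μ) : Integrable (llr μ.snd ρ₂) μ.snd :=
  Measure.snd_prod (μ := ρ₁) (ν := ρ₂) ▸ InformationTheory.integrable_llr_map h measurable_snd hint

lemma integral_llr_fst_add_integral_llr_snd_le [IsProbabilityMeasure μ] (h : μ ≪ ρ₁.prod ρ₂)
    (hint : Integrable (llr μ (ρ₁.prod ρ₂)) μ) :
    ∫ x, llr μ.fst ρ₁ x ∂μ.fst + ∫ y, llr μ.snd ρ₂ y ∂μ.snd ≤ ∫ p, llr μ (ρ₁.prod ρ₂) p ∂μ := by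
  have h₁ := h.fst_of_prod
  have h₂ := h.snd_of_prod
  have hμm := Measure.absolutelyContinuous_fst_prod_snd h
  have hint₁ : Integrable (fun p : α × β => llr μ.fst ρ₁ p.1) μ :=
    (integrable_llr_fst h hint).comp_measurable measurable_fst
  have hint₂ : Integrable (fun p : α × β => llr μ.snd ρ₂ p.2) μ :=
    (integrable_llr_snd h hint).comp_measurable measurable_snd
  set G : α × β → ℝ := fun p => llr μ.fst ρ₁ p.1 + llr μ.snd ρ₂ p.2 with hG_def
  have hG_integral :
      ∫ p, G p ∂μ = ∫ x, llr μ.fst ρ₁ x ∂μ.fst + ∫ y, llr μ.snd ρ₂ y ∂μ.snd := by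
    rw [hG_def, integral_add hint₁ hint₂, Measure.fst, Measure.snd,
      integral_map measurable_fst.aemeasurable (stronglyMeasurable_llr _ _).aestronglyMeasurable,
      integral_map measurable_snd.aemeasurable (stronglyMeasurable_llr _ _).aestronglyMeasurable]
  have hsplit : llr μ (ρ₁.prod ρ₂) =ᵐ[μ] llr μ (μ.fst.prod μ.snd) + G :=
    (llr_ae_eq_llr_add_llr hμm (h₁.prod h₂)).trans
      (Filter.EventuallyEq.rfl.add (hμm.ae_le (llr_prod_ae_eq h₁ h₂)))
  have hG : Integrable G μ := hint₁.add hint₂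
  have hint_m : Integrable (llr μ (μ.fst.prod μ.snd)) μ :=
    (hint.sub hG).congr (by filter_upwards [hsplit] with p hp; simp [hp])
  calc _ = ∫ p, G p ∂μ := hG_integral.symm
    _ ≤ ∫ p, llr μ (μ.fst.prod μ.snd) p ∂μ + ∫ p, G p ∂μ :=
      le_add_of_nonneg_left (integral_llr_nonneg hμm (by simp))
    _ = ∫ p, llr μ (ρ₁.prod ρ₂) p ∂μ := by
      rw [← integral_add hint_m hG]
      exact integral_congr_ae hsplit.symm

end Marginals

end MeasureTheory

section KlDiv

variable {X : Type*} [MeasurableSpace X] {μ ν : Measure X}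

-- `llr μ ν x` unfolds to `Real.log (μ.rnDeriv ν x).toReal`, the integrand in `klDiv`.
lemma klDiv_of_ac_of_integrable (h : μ ≪ ν) (hint : Integrable (llr μ ν) μ) :
    klDiv μ ν = ENNReal.ofReal (∫ x, llr μ ν x ∂μ) :=
  if_pos ⟨h, hint⟩

lemma klDiv_eq_top (h : ¬(μ ≪ ν ∧ Integrable (llr μ ν) μ)) : klDiv μ ν = ⊤ :=
  if_neg h

end KlDiv

theorem KL_superadditive_prod
    {α β : Type*} [MeasurableSpace α] [MeasurableSpace β]
    (μ : Measure (α × β)) [IsProbabilityMeasure μ]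
    (ρ₁ : Measure α) (ρ₂ : Measure β)
    [IsProbabilityMeasure ρ₁] [IsProbabilityMeasure ρ₂] :
    klDiv μ.fst ρ₁ + klDiv μ.snd ρ₂ ≤ klDiv μ (ρ₁.prod ρ₂) := by
  by_cases h : μ ≪ ρ₁.prod ρ₂ ∧ Integrable (llr μ (ρ₁.prod ρ₂)) μ
  swap
  · simp [klDiv_eq_top h]
  obtain ⟨hac, hint⟩ := h
  rw [klDiv_of_ac_of_integrable hac hint,
    klDiv_of_ac_of_integrable hac.fst_of_prod (integrable_llr_fst hac hint),
    klDiv_of_ac_of_integrable hac.snd_of_prod (integrable_llr_snd hac hint),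
    ← ENNReal.ofReal_add (integral_llr_nonneg hac.fst_of_prod (by simp))
      (integral_llr_nonneg hac.snd_of_prod (by simp))]
  exact ENNReal.ofReal_le_ofReal (integral_llr_fst_add_integral_llr_snd_le hac hint)
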